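/- Let b ∈ L¹[−1,1] be such that b₀(x) := b(x)√((1−x)/(1+x)) satisfies b₀(x) = b₀(−x) for almost every x ∈ (−1,1). Define d on T by d(e^{iθ}) = b₀(cos(θ/2)) for 0 ≤ θ < 2π. Then for every n ≥ 1: det H_n[b] = det T_n(d), where T_n(d) = (d_{j−k})_{j,k=0}^{n−1}. -/

import Mathlib

open Filter MeasureTheory

noncomputable section

/-- The `k`-th Fourier coefficient of a function on the unit circle, given as a
`2π`-periodic function of the angle: `d_k = (1/(2π)) ∫_0^{2π} f(θ) e^{-ikθ} dθ`. -/
def fc (f : ℝ → ℂ) (k : ℤ) : ℂ :=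
  ((1 / (2 * Real.pi) : ℝ) : ℂ) *
    ∫ θ in (0:ℝ)..(2 * Real.pi), f θ * Complex.exp (-(Complex.I * k * θ))

/-- The Hankel-matrix entry `b_{m}` with `m = e + 1`:
`bmom b e = (1/π) ∫_{-1}^1 b(x)(2x)^e dx`. -/
def bmom (b : ℝ → ℂ) (e : ℕ) : ℂ :=
  ((1 / Real.pi : ℝ) : ℂ) * ∫ x in (-1:ℝ)..1, b x * (2 * (x : ℂ)) ^ e

/-!
On `(-1, 1)` write `b = κ · (1 + x)` with `κ(x) = b₀(x) / √(1 - x²)`; `κ` is even and integrable,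
and under `x = cos φ` the measure `κ(x) dx` becomes `b₀(cos φ) dφ`, so `d_m = (1/π) ∫ κ T_{2m}`.
The Hankel matrix is the Gram matrix of the monomials `(2x)^j` for the form
`⟨p, q⟩ = (1/π) ∫ κ (1 + x) p q`. Replacing them by the third-kind Chebyshev polynomials
`V_a`, which are monic in `2x`, does not change the determinant, and
`(1 + x) V_a V_c = T_{a-c} + T_{a+c+1}`.
Since `κ` is even, the odd-index term integrates to zero and the other one is `d_{ζ a - ζ c}`, where
`ζ = 0, -1, 1, -2, 2, …` enumerates an interval of integers; relabelling rows and columns by `ζ`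
gives `T_n(d)`.
-/

open Polynomial Matrix

theorem det_gram_eq_det_hankel_of_monic {R A : Type*} [CommRing R] [CommRing A] [Algebra R A]
    (Ψ : R[X] →ₗ[R] A) (p : ℕ → R[X]) (hmonic : ∀ a, (p a).Monic)
    (hdeg : ∀ a, (p a).natDegree = a) (n : ℕ) :
    (of fun a c : Fin n => Ψ (p a * p c)).det
      = (of fun j k : Fin n => Ψ (X ^ (j + k : ℕ))).det := by
  set M : Matrix (Fin n) (Fin n) A :=
    (algebraMap R A).mapMatrix (of fun (j a : Fin n) => (p a).coeff j)
  have hM : M.det = 1 := by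
    rw [← RingHom.map_det, det_matrixOfPolynomials _ (fun a => hdeg a) (fun a => hmonic a),
      map_one]
  have hexpand (a : Fin n) : p a = ∑ j : Fin n, C ((p a).coeff j) * X ^ (j : ℕ) := by
    rw [Fin.sum_univ_eq_sum_range (fun j => C ((p a).coeff j) * X ^ j)]
    exact as_sum_range_C_mul_X_pow' _ (by rw [hdeg]; exact a.2)
  have hgram : (of fun a c : Fin n => Ψ (p a * p c))
      = Mᵀ * (of fun j k : Fin n => Ψ (X ^ (j + k : ℕ))) * M := by
    ext a c
    simp only [of_apply, mul_apply, Finset.sum_mul]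
    rw [hexpand a, hexpand c, Finset.sum_mul_sum, map_sum, Finset.sum_comm]
    refine Finset.sum_congr rfl fun k _ => ?_
    rw [map_sum]
    refine Finset.sum_congr rfl fun j _ => ?_
    rw [mul_mul_mul_comm, ← C_mul, ← pow_add, ← smul_eq_C_mul, map_smul, Algebra.smul_def]
    simp only [M, RingHom.mapMatrix_apply, transpose_apply, map_apply, of_apply, map_mul]
    ring
  rw [hgram, det_mul, det_mul, det_transpose, hM, one_mul, mul_one]

namespace Polynomial.Chebyshev

variable (R : Type*) [CommRing R]

/-- The Chebyshev polynomials of the third kind, rescaled like `S` and `C`: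
`V n (2 cos θ) * cos (θ / 2) = cos ((n + 1/2) θ)`. -/
def V (n : ℤ) : R[X] := S R n - S R (n - 1)

theorem V_add_two (n : ℤ) : V R (n + 2) = X * V R (n + 1) - V R n := by
  simp only [V, show n + 2 - 1 = n + 1 by ring, show n + 1 - 1 = n by ring]
  linear_combination S_add_two R n - S_add_one R n

theorem V_zero : V R 0 = 1 := by simp [V]

theorem V_one : V R 1 = X - 1 := by simp [V]

theorem monic_V_and_natDegree_V [Nontrivial R] (n : ℕ) : (V R n).Monic ∧ (V R n).natDegree = n := by
  induction n using Nat.twoStepInduction with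
  | zero => simp [V_zero]
  | one => simp only [Nat.cast_one, V_one]; exact ⟨monic_X_sub_C 1, natDegree_X_sub_C 1⟩
  | more n ih₀ ih₁ =>
    have hX : (X * V R (n + 1 : ℕ)).Monic ∧ (X * V R (n + 1 : ℕ)).natDegree = n + 2 := by
      refine ⟨monic_X.mul ih₁.1, ?_⟩
      rw [monic_X.natDegree_mul ih₁.1, natDegree_X, ih₁.2]; ring
    have hlt : (V R n).natDegree < (X * V R (n + 1 : ℕ)).natDegree := by omega
    push_cast
    rw [V_add_two]
    push_cast at hX hlt
    exact ⟨hX.1.sub_of_left (degree_lt_degree hlt),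
      by rw [natDegree_sub_eq_left_of_natDegree_lt hlt, hX.2]⟩

theorem X_mul_C (m : ℤ) : X * C R m = C R (m + 1) + C R (m - 1) := by
  rw [C_add_one]; ring

theorem two_add_X_mul_V (c : ℤ) : (2 + X) * V R c = C R c + C R (c + 1) := by
  rw [V, C_eq_S_sub_X_mul_S R c, C_eq_S_sub_X_mul_S R (c + 1), add_sub_cancel_right,
    S_add_one]
  ring

theorem two_add_X_mul_V_mul_V (a : ℕ) (c : ℤ) :
    (2 + X) * V R a * V R c = C R (a - c) + C R (a + c + 1) := by
  induction a using Nat.twoStepInduction with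
  | zero => simp [V_zero, two_add_X_mul_V, C_neg]
  | one =>
    rw [Nat.cast_one, V_one, mul_comm _ (X - 1), mul_assoc, two_add_X_mul_V, mul_add,
      sub_mul, sub_mul, X_mul_C, X_mul_C, ← C_neg R (1 - c)]
    ring_nf
  | more a ih₀ ih₁ =>
    push_cast at ih₁ ⊢
    rw [V_add_two]
    linear_combination (norm := ring_nf) X * ih₁ - ih₀ + X_mul_C R (a + 1 - c) +
      X_mul_C R (a + c + 2)

theorem one_add_mul_eval_V_mul_eval_V {K : Type*} [Field K] [CharZero K] (a : ℕ) (c : ℤ)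
    (x : K) : (1 + x) * (V K a).eval (2 * x) * (V K c).eval (2 * x)
      = (T K (a - c)).eval x + (T K (a + c + 1)).eval x := by
  have hC (m : ℤ) : (C K m).eval (2 * x) = 2 * (T K m).eval x := by
    simpa using congrArg (eval x) (C_comp_two_mul_X K m)
  have h := congrArg (eval (2 * x)) (two_add_X_mul_V_mul_V K a c)
  simp only [eval_mul, eval_add, eval_ofNat, eval_X, hC] at h
  linear_combination h / 2

end Polynomial.Chebyshev

open Polynomial.Chebyshev Set Real

/-- Enumerates `0, -1, 1, -2, 2, …`, so that `zigzag '' [0, n)` is an interval of `n` integers. -/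
def zigzag (a : ℕ) : ℤ := if a % 2 = 0 then ((a / 2 : ℕ) : ℤ) else -((a / 2 : ℕ) + 1 : ℤ)

theorem det_of_zigzag_sub {R : Type*} [CommRing R] (f : ℤ → R) (n : ℕ) :
    (of fun a c : Fin n => f (zigzag a - zigzag c)).det
      = (of fun j k : Fin n => f (j - k)).det := by
  let σ (a : Fin n) : Fin n :=
    ⟨if a.1 % 2 = 0 then n / 2 + a / 2 else n / 2 - (a / 2 + 1),
      by have := a.2; split_ifs <;> omega⟩
  have hσ (a : Fin n) : ((σ a : ℕ) : ℤ) = zigzag a + (n / 2 : ℕ) := by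
    have := a.2; simp only [σ, zigzag]; split_ifs <;> omega
  have hinj : Function.Injective σ := fun a c h => by
    have := congrArg (fun i : Fin n => ((i : ℕ) : ℤ)) h
    simp only [hσ] at this
    have ha := a.2; have hc := c.2
    simp only [zigzag] at this
    ext; split_ifs at this <;> omega
  let e : Fin n ≃ Fin n := Equiv.ofBijective σ (Finite.injective_iff_bijective.mp hinj)
  rw [← det_submatrix_equiv_self e (of fun j k : Fin n => f (j - k))]
  congr 1
  ext a c
  simp only [submatrix_apply, of_apply, e, Equiv.ofBijective_apply, hσ]
  ring_nf

theorem add_eq_two_mul_zigzag_sub {M : Type*} [AddCommMonoid M] (τ : ℤ → M)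
    (hneg : ∀ k, τ (-k) = τ k) (hodd : ∀ k, Odd k → τ k = 0) (a c : ℕ) :
    τ (a - c) + τ (a + c + 1) = τ (2 * (zigzag a - zigzag c)) := by
  set z := 2 * (zigzag a - zigzag c)
  rcases Nat.mod_two_eq_zero_or_one (a + c) with h | h
  · rw [hodd (a + c + 1) (by rw [Int.odd_iff]; omega), add_zero]
    obtain h' | h' : (a - c : ℤ) = z ∨ (a - c : ℤ) = -z := by
      simp only [z, zigzag]; split_ifs <;> omega
    · rw [h']
    · rw [h', hneg]
  · rw [hodd (a - c) (by rw [Int.odd_iff]; omega), zero_add]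
    obtain h' | h' : (a + c + 1 : ℤ) = z ∨ (a + c + 1 : ℤ) = -z := by
      simp only [z, zigzag]; split_ifs <;> omega
    · rw [h']
    · rw [h', hneg]

theorem restrict_uIoc_eq_restrict_Ioo {a b : ℝ} (h : a ≤ b) :
    volume.restrict (uIoc a b) = volume.restrict (Ioo a b) := by
  rw [uIoc_of_le h]
  exact Measure.restrict_congr_set Ioo_ae_eq_Ioc.symm

theorem integral_sin_smul_comp_cos {E : Type*} [NormedAddCommGroup E] [NormedSpace ℝ E]
    [CompleteSpace E] (g : ℝ → E) :
    ∫ φ in (0 : ℝ)..π, sin φ • g (cos φ) = ∫ x in (-1 : ℝ)..1, g x := by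
  have h := intervalIntegral.integral_deriv_smul_comp_of_deriv_nonpos (g := g)
    (a := 0) (b := π) continuous_cos.continuousOn (fun φ _ => hasDerivAt_cos φ)
    (fun φ hφ => by
      rw [min_eq_left pi_pos.le, max_eq_right pi_pos.le] at hφ
      exact neg_nonpos.mpr (sin_pos_of_pos_of_lt_pi hφ.1 hφ.2).le)
  rw [cos_zero, cos_pi] at h
  rw [intervalIntegral.integral_symm 1 (-1 : ℝ), ← h, ← intervalIntegral.integral_neg]
  simp

theorem integral_mul_eq_zero_of_odd {κ g : ℝ → ℂ}
    (heven : ∀ᵐ x ∂volume.restrict (Ioo (-1 : ℝ) 1), κ (-x) = κ x)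
    (hodd : ∀ x ∈ Ioo (-1 : ℝ) 1, g (-x) = -g x) :
    ∫ x in (-1 : ℝ)..1, κ x * g x = 0 := by
  have hrefl : ∫ x in (-1 : ℝ)..1, κ x * g x = ∫ x in (-1 : ℝ)..1, -(κ x * g x) := by
    calc ∫ x in (-1 : ℝ)..1, κ x * g x = ∫ x in (-1 : ℝ)..1, κ (-x) * g (-x) := by
          rw [intervalIntegral.integral_comp_neg (fun x => κ x * g x), neg_neg]
      _ = _ := by
          refine intervalIntegral.integral_congr_ae_restrict ?_
          rw [restrict_uIoc_eq_restrict_Ioo (by norm_num)]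
          filter_upwards [heven, ae_restrict_mem measurableSet_Ioo] with x hx hmem
          rw [hx, hodd x hmem, mul_neg]
  rw [intervalIntegral.integral_neg] at hrefl
  exact self_eq_neg.mp hrefl

theorem integral_mul_exp_arccos_eq {κ : ℝ → ℂ} (hκ : IntervalIntegrable κ volume (-1) 1)
    (heven : ∀ᵐ x ∂volume.restrict (Ioo (-1 : ℝ) 1), κ (-x) = κ x) (m : ℤ) :
    ∫ x in (-1 : ℝ)..1, κ x * Complex.exp (-(Complex.I * m * (2 * arccos x : ℝ)))
      = ∫ x in (-1 : ℝ)..1, κ x * (((T ℝ (2 * m)).eval x : ℝ) : ℂ) := by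
  let s (x : ℝ) : ℂ := (sin (2 * m * arccos x) : ℝ)
  have hs_odd : ∀ x ∈ Ioo (-1 : ℝ) 1, s (-x) = -s x := fun x _ => by
    simp only [s, arccos_neg, ← Complex.ofReal_neg, ← sin_int_mul_two_pi_sub _ m]
    ring_nf
  have hexp : ∀ x ∈ uIcc (-1 : ℝ) 1, κ x * Complex.exp (-(Complex.I * m * (2 * arccos x : ℝ)))
      = κ x * (((T ℝ (2 * m)).eval x : ℝ) : ℂ) - Complex.I * (κ x * s x) := fun x hx => by
    rw [uIcc_of_le (by norm_num)] at hx
    have hT : (T ℝ (2 * m)).eval x = cos (2 * m * arccos x) := by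
      conv_lhs => rw [← cos_arccos hx.1 hx.2]
      rw [T_real_cos]; push_cast; ring_nf
    rw [show -(Complex.I * m * (2 * arccos x : ℝ)) = ((-(2 * m * arccos x)) : ℝ) * Complex.I by
      push_cast; ring, Complex.exp_mul_I, ← Complex.ofReal_cos, ← Complex.ofReal_sin, cos_neg,
      sin_neg, hT]
    simp only [s]; push_cast; ring
  rw [intervalIntegral.integral_congr hexp, intervalIntegral.integral_sub
    (hκ.mul_continuousOn (by fun_prop)) ((hκ.mul_continuousOn (by fun_prop)).const_mul _),
    intervalIntegral.integral_const_mul, integral_mul_eq_zero_of_odd heven hs_odd, mul_zero,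
    sub_zero]

theorem det_hankel_eq_det_toeplitz_of_even {κ : ℝ → ℂ} (hκ : IntervalIntegrable κ volume (-1) 1)
    (heven : ∀ᵐ x ∂volume.restrict (Ioo (-1 : ℝ) 1), κ (-x) = κ x) (n : ℕ) :
    (of fun j k : Fin n => ∫ x in (-1 : ℝ)..1, κ x * (1 + x) * (2 * x) ^ (j + k : ℕ)).det
      = (of fun j k : Fin n =>
          ∫ x in (-1 : ℝ)..1, κ x * (((T ℝ (2 * ((j : ℤ) - k))).eval x : ℝ) : ℂ)).det := by
  have hκg (g : ℝ → ℂ) (hg : Continuous g) :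
      IntervalIntegrable (fun x => κ x * g x) volume (-1) 1 :=
    hκ.mul_continuousOn hg.continuousOn
  let Ψ : ℝ[X] →ₗ[ℝ] ℂ :=
    { toFun p := ∫ x in (-1 : ℝ)..1, κ x * (((1 + x) * p.eval (2 * x) : ℝ) : ℂ)
      map_add' p q := by
        simp only [eval_add, mul_add, Complex.ofReal_add]
        exact intervalIntegral.integral_add (hκg _ (by fun_prop)) (hκg _ (by fun_prop))
      map_smul' r p := by
        simp only [eval_smul, smul_eq_mul, Complex.ofReal_mul, RingHom.id_apply]
        rw [← intervalIntegral.integral_smul]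
        congr 1; ext x; rw [Complex.real_smul]; ring }
  let τ (k : ℤ) : ℂ := ∫ x in (-1 : ℝ)..1, κ x * (((T ℝ k).eval x : ℝ) : ℂ)
  have hτ_neg (k : ℤ) : τ (-k) = τ k := by simp only [τ, T_neg]
  have hτ_odd (k : ℤ) (hk : Odd k) : τ k = 0 := integral_mul_eq_zero_of_odd heven fun x _ => by
    rw [T_eval_neg, Int.negOnePow_odd _ hk]; push_cast; ring
  have hgram (a c : ℕ) : Ψ (V ℝ a * V ℝ c) = τ (2 * (zigzag a - zigzag c)) := by
    rw [← add_eq_two_mul_zigzag_sub τ hτ_neg hτ_odd,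
      ← intervalIntegral.integral_add (hκg _ (by fun_prop)) (hκg _ (by fun_prop))]
    refine intervalIntegral.integral_congr fun x _ => ?_
    simp only [eval_mul]
    rw [← mul_add, ← Complex.ofReal_add, ← one_add_mul_eval_V_mul_eval_V, mul_assoc]
  calc _ = (of fun j k : Fin n => Ψ (X ^ (j + k : ℕ))).det := by
        congr 1; ext j k; simp [Ψ, mul_assoc]
    _ = (of fun a c : Fin n => Ψ (V ℝ a * V ℝ c)).det :=
        (det_gram_eq_det_hankel_of_monic Ψ (fun a => V ℝ a)
          (fun a => (monic_V_and_natDegree_V ℝ a).1) (fun a => (monic_V_and_natDegree_V ℝ a).2)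
          n).symm
    _ = _ := by
        simp only [hgram]
        exact det_of_zigzag_sub (fun k => τ (2 * k)) n

/-- The density of `b₀(cos φ) dφ` on `[0, π]` in the variable `x = cos φ`. -/
def symbolDensity (b0 : ℝ → ℂ) (x : ℝ) : ℂ := b0 x / (√(1 - x ^ 2) : ℝ)

theorem sqrt_div_mul_one_add {x : ℝ} (hx : -1 < x) :
    √((1 - x) / (1 + x)) * (1 + x) = √(1 - x ^ 2) := by
  have hx' : 0 ≤ 1 + x := by linarith
  rw [← sqrt_sq hx', ← sqrt_mul' _ (sq_nonneg _), sqrt_sq hx']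
  congr 1
  field_simp
  ring

theorem symbolDensity_cos_mul_sin (b0 : ℝ → ℂ) {φ : ℝ} (hφ : φ ∈ Ioo 0 π) :
    symbolDensity b0 (cos φ) * (sin φ : ℂ) = b0 (cos φ) := by
  have hsin : 0 < sin φ := sin_pos_of_pos_of_lt_pi hφ.1 hφ.2
  rw [symbolDensity, ← sin_eq_sqrt_one_sub_cos_sq hφ.1.le hφ.2.le,
    div_mul_cancel₀ _ (Complex.ofReal_ne_zero.mpr hsin.ne')]

theorem ae_symbolDensity_neg {b0 : ℝ → ℂ}
    (heven : ∀ᵐ x ∂volume.restrict (Ioo (-1 : ℝ) 1), b0 x = b0 (-x)) :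
    ∀ᵐ x ∂volume.restrict (Ioo (-1 : ℝ) 1), symbolDensity b0 (-x) = symbolDensity b0 x := by
  filter_upwards [heven] with x hx
  rw [symbolDensity, symbolDensity, ← hx, neg_sq]

section

variable {b b0 : ℝ → ℂ} (hb0 : ∀ x : ℝ, b0 x = b x * ((√((1 - x) / (1 + x)) : ℝ) : ℂ))
include hb0

theorem eq_symbolDensity_mul {x : ℝ} (hx : x ∈ Ioo (-1 : ℝ) 1) :
    b x = symbolDensity b0 x * (1 + x) := by
  have hsqrt : (√(1 - x ^ 2) : ℂ) ≠ 0 := by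
    rw [Complex.ofReal_ne_zero, sqrt_ne_zero']; nlinarith [hx.1, hx.2]
  rw [symbolDensity, hb0, div_mul_eq_mul_div, eq_div_iff hsqrt, mul_assoc,
    ← sqrt_div_mul_one_add hx.1]
  push_cast; ring

theorem bmom_eq_integral_symbolDensity (e : ℕ) :
    bmom b e = ((1 / π : ℝ) : ℂ) *
      ∫ x in (-1 : ℝ)..1, symbolDensity b0 x * (1 + x) * (2 * x) ^ e := by
  rw [bmom]
  congr 1
  refine intervalIntegral.integral_congr_ae_restrict ?_
  rw [restrict_uIoc_eq_restrict_Ioo (by norm_num)]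
  filter_upwards [ae_restrict_mem measurableSet_Ioo] with x hx
  rw [eq_symbolDensity_mul hb0 hx]

theorem intervalIntegrable_symbolDensity (hbint : IntegrableOn b (Icc (-1 : ℝ) 1))
    (heven : ∀ᵐ x ∂volume.restrict (Ioo (-1 : ℝ) 1), symbolDensity b0 (-x) = symbolDensity b0 x) :
    IntervalIntegrable (symbolDensity b0) volume (-1) 1 := by
  have hbI : IntervalIntegrable b volume (-1) 1 :=
    (intervalIntegrable_iff_integrableOn_Icc_of_le (by norm_num)).mpr hbint
  have hdom : IntegrableOn (fun x => ‖b x‖ + ‖b (-x)‖) (Ioo (-1 : ℝ) 1) := by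
    rw [← intervalIntegrable_iff_integrableOn_Ioo_of_le (by norm_num)]
    have hb_neg := ((IntervalIntegrable.iff_comp_neg (f := b)).mp hbI).symm
    exact hbI.norm.add (by simpa using hb_neg.norm)
  have hmeas : AEStronglyMeasurable (symbolDensity b0) (volume.restrict (Ioo (-1 : ℝ) 1)) := by
    have hb : AEStronglyMeasurable b (volume.restrict (Ioo (-1 : ℝ) 1)) :=
      (hbint.mono_set Ioo_subset_Icc_self).aestronglyMeasurable
    have hw : Measurable fun x : ℝ => ((√((1 - x) / (1 + x)) / √(1 - x ^ 2) : ℝ) : ℂ) :=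
      Complex.measurable_ofReal.comp (by fun_prop)
    rw [show symbolDensity b0 = fun x => b x * ((√((1 - x) / (1 + x)) / √(1 - x ^ 2) : ℝ) : ℂ)
      from funext fun x => by rw [symbolDensity, hb0]; push_cast; ring]
    exact hb.mul hw.aestronglyMeasurable
  have hle {x : ℝ} (hx : x ∈ Ioo (-1 : ℝ) 1) (hx0 : 0 ≤ x) : ‖symbolDensity b0 x‖ ≤ ‖b x‖ := by
    rw [eq_symbolDensity_mul hb0 hx, norm_mul]
    refine le_mul_of_one_le_right (norm_nonneg _) ?_
    rw [← Complex.ofReal_one, ← Complex.ofReal_add, Complex.norm_real, norm_of_nonneg (by linarith)]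
    linarith
  rw [intervalIntegrable_iff_integrableOn_Ioo_of_le (by norm_num)]
  refine hdom.mono' hmeas ?_
  filter_upwards [heven, ae_restrict_mem measurableSet_Ioo] with x hx hmem
  rcases le_total 0 x with hx0 | hx0
  · exact (hle hmem hx0).trans (le_add_of_nonneg_right (norm_nonneg _))
  · have hmem' : -x ∈ Ioo (-1 : ℝ) 1 := ⟨by linarith [hmem.2], by linarith [hmem.1]⟩
    rw [← hx]
    exact (hle hmem' (by linarith)).trans (le_add_of_nonneg_left (norm_nonneg _))

end

theorem fc_eq_integral_symbolDensity {b0 d : ℝ → ℂ}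
    (hd : ∀ θ : ℝ, 0 ≤ θ → θ < 2 * π → d θ = b0 (cos (θ / 2)))
    (hκ : IntervalIntegrable (symbolDensity b0) volume (-1) 1)
    (heven : ∀ᵐ x ∂volume.restrict (Ioo (-1 : ℝ) 1), symbolDensity b0 (-x) = symbolDensity b0 x)
    (m : ℤ) :
    fc d m = ((1 / π : ℝ) : ℂ) *
      ∫ x in (-1 : ℝ)..1, symbolDensity b0 x * (((T ℝ (2 * m)).eval x : ℝ) : ℂ) := by
  have hdouble := intervalIntegral.smul_integral_comp_mul_left
    (fun θ : ℝ => d θ * Complex.exp (-(Complex.I * m * θ))) (a := 0) (b := π) 2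
  rw [mul_zero] at hdouble
  have hsubst : ∫ φ in (0 : ℝ)..π, d (2 * φ) * Complex.exp (-(Complex.I * m * (2 * φ : ℝ)))
      = ∫ φ in (0 : ℝ)..π, sin φ • (symbolDensity b0 (cos φ) *
          Complex.exp (-(Complex.I * m * (2 * arccos (cos φ) : ℝ)))) := by
    refine intervalIntegral.integral_congr_ae_restrict ?_
    rw [restrict_uIoc_eq_restrict_Ioo pi_pos.le]
    filter_upwards [ae_restrict_mem measurableSet_Ioo] with φ hφ
    rw [hd _ (by linarith [hφ.1]) (by linarith [hφ.2]), mul_div_cancel_left₀ _ two_ne_zero,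
      arccos_cos hφ.1.le hφ.2.le, Complex.real_smul, ← mul_assoc, mul_comm (sin φ : ℂ),
      symbolDensity_cos_mul_sin b0 hφ]
  rw [fc, ← hdouble, hsubst, integral_sin_smul_comp_cos
    (fun x => symbolDensity b0 x * Complex.exp (-(Complex.I * m * (2 * arccos x : ℝ)))),
    integral_mul_exp_arccos_eq hκ heven, Complex.real_smul, ← mul_assoc]
  congr 1
  push_cast
  field_simp

/-- Let `b ∈ L¹[−1,1]` be such that `b₀(x) = b(x)√((1−x)/(1+x))` is even (a.e.) on
`(−1,1)`, and define `d` on the circle by `d(e^{iθ}) = b₀(cos(θ/2))` for `0 ≤ θ < 2π`.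
Then for every `n ≥ 1`, `det H_n[b] = det T_n(d)`. -/
theorem stmt10 (b : ℝ → ℂ) (hbint : IntegrableOn b (Set.Icc (-1 : ℝ) 1))
    (b0 : ℝ → ℂ)
    (hb0 : ∀ x : ℝ, b0 x = b x * ((Real.sqrt ((1 - x) / (1 + x)) : ℝ) : ℂ))
    (heven : ∀ᵐ x ∂(volume.restrict (Set.Ioo (-1:ℝ) 1)), b0 x = b0 (-x))
    (d : ℝ → ℂ)
    (hd : ∀ θ : ℝ, 0 ≤ θ → θ < 2 * Real.pi → d θ = b0 (Real.cos (θ / 2))) :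
    ∀ n : ℕ, 1 ≤ n →
      (Matrix.of fun j k : Fin n => bmom b ((j : ℕ) + k)).det
        = (Matrix.of fun j k : Fin n => fc d ((j : ℤ) - k)).det := by
  intro n _
  have hκ_even := ae_symbolDensity_neg heven
  have hκ := intervalIntegrable_symbolDensity hb0 hbint hκ_even
  have hH : (of fun j k : Fin n => bmom b ((j : ℕ) + k)) = ((1 / π : ℝ) : ℂ) •
      of fun j k : Fin n => ∫ x in (-1 : ℝ)..1,
        symbolDensity b0 x * (1 + x) * (2 * x) ^ ((j : ℕ) + k) := by
    ext j k
    rw [of_apply, bmom_eq_integral_symbolDensity hb0, Matrix.smul_apply, of_apply, smul_eq_mul]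
  have hT : (of fun j k : Fin n => fc d ((j : ℤ) - k)) = ((1 / π : ℝ) : ℂ) •
      of fun j k : Fin n => ∫ x in (-1 : ℝ)..1,
        symbolDensity b0 x * (((T ℝ (2 * ((j : ℤ) - k))).eval x : ℝ) : ℂ) := by
    ext j k
    rw [of_apply, fc_eq_integral_symbolDensity hd hκ hκ_even, Matrix.smul_apply, of_apply,
      smul_eq_mul]
  rw [hH, hT, det_smul, det_smul, det_hankel_eq_det_toeplitz_of_even hκ hκ_even]

end
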